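/- With R, S, I, σ² as above, define H(p;p⁰) = log(S(p⁰)+σ²) + Σ_i (p_i−p_i⁰) a_i/(S(p⁰)+σ²) − log(I(p⁰)+σ²) − Σ_i (log p_i − log p_i⁰) b_i p_i⁰/(I(p⁰)+σ²). Then R(p) ≤ H(p; p⁰) for all p > 0, with equality at p = p⁰. -/
import Mathlib


/-- the SCA surrogate `H(p; p⁰)` is a global upper bound on the
rate `R(p) = log(S(p)+σ²) − log(I(p)+σ²)`, with equality at `p = p⁰`. Here the
concave term `log(S(p)+σ²)` is linearized in `p` and the term `log(I(p)+σ²)` is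
lower-bounded by linearization in log-coordinates. -/
theorem stmt_5 (K : ℕ) (a b : Fin K → ℝ) (σ2 : ℝ)
    (ha : ∀ n, 0 ≤ a n) (hb : ∀ n, 0 ≤ b n) (hσ : 0 < σ2)
    (R : (Fin K → ℝ) → ℝ)
    (hR : ∀ p, R p = Real.log (∑ n, a n * p n + σ2) - Real.log (∑ n, b n * p n + σ2))
    (H : (Fin K → ℝ) → (Fin K → ℝ) → ℝ)
    (hH : ∀ p p0, H p p0 = Real.log (∑ n, a n * p0 n + σ2)
      + ∑ i, (p i - p0 i) * (a i / (∑ n, a n * p0 n + σ2))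
      - Real.log (∑ n, b n * p0 n + σ2)
      - ∑ i, (Real.log (p i) - Real.log (p0 i)) *
          (b i * p0 i / (∑ n, b n * p0 n + σ2))) :
    ∀ p p0 : Fin K → ℝ, (∀ i, 0 < p i) → (∀ i, 0 < p0 i) →
      R p ≤ H p p0 ∧ H p0 p0 = R p0 := by
  intro p p0 hp hp0
  set A := ∑ n, a n * p n + σ2 with hA_def
  set A0 := ∑ n, a n * p0 n + σ2 with hA0_def
  set B := ∑ n, b n * p n + σ2 with hB_def
  set B0 := ∑ n, b n * p0 n + σ2 with hB0_def
  have hApos : 0 < A := add_pos_of_nonneg_of_pos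
    (Finset.sum_nonneg fun i _ => mul_nonneg (ha i) (hp i).le) hσ
  have hA0pos : 0 < A0 := add_pos_of_nonneg_of_pos
    (Finset.sum_nonneg fun i _ => mul_nonneg (ha i) (hp0 i).le) hσ
  have hBpos : 0 < B := add_pos_of_nonneg_of_pos
    (Finset.sum_nonneg fun i _ => mul_nonneg (hb i) (hp i).le) hσ
  have hB0pos : 0 < B0 := add_pos_of_nonneg_of_pos
    (Finset.sum_nonneg fun i _ => mul_nonneg (hb i) (hp0 i).le) hσ
  constructor
  · rw [hR, hH, ← hA_def, ← hA0_def, ← hB_def, ← hB0_def]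
    -- Step 1: linearization bound on log A
    have h1 : Real.log A - Real.log A0 ≤ (A - A0) / A0 := by
      have h := Real.log_le_sub_one_of_pos (div_pos hApos hA0pos)
      rw [Real.log_div hApos.ne' hA0pos.ne'] at h
      have : A / A0 - 1 = (A - A0) / A0 := by field_simp
      linarith
    have hsum1 : ∑ i, (p i - p0 i) * (a i / A0) = (A - A0) / A0 := by
      have hAA : A - A0 = ∑ i, (a i * p i - a i * p0 i) := by
        rw [Finset.sum_sub_distrib, hA_def, hA0_def]; ring
      rw [hAA, Finset.sum_div]
      exact Finset.sum_congr rfl fun i _ => by field_simp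
    -- Step 2: log-coordinate linearization bound on log B
    set c := B / B0 with hc_def
    have hcpos : 0 < c := div_pos hBpos hB0pos
    have tangent : ∀ x : ℝ, 0 < x → Real.log x ≤ Real.log c + x / c - 1 := by
      intro x hx
      have h := Real.log_le_sub_one_of_pos (div_pos hx hcpos)
      rw [Real.log_div hx.ne' hcpos.ne'] at h
      linarith
    have hpt : ∀ i, (Real.log (p i) - Real.log (p0 i)) * (b i * p0 i / B0)
        ≤ (Real.log c + (p i / p0 i) / c - 1) * (b i * p0 i / B0) := by
      intro i
      apply mul_le_mul_of_nonneg_right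
      · have := tangent (p i / p0 i) (div_pos (hp i) (hp0 i))
        rw [Real.log_div (hp i).ne' (hp0 i).ne'] at this
        linarith
      · exact div_nonneg (mul_nonneg (hb i) (hp0 i).le) hB0pos.le
    have hsum2 : ∑ i, (Real.log c + (p i / p0 i) / c - 1) * (b i * p0 i / B0)
        = (Real.log c - 1) * ((B0 - σ2) / B0) + (B - σ2) / (B0 * c) := by
      have e0 : ∑ i, (Real.log c + (p i / p0 i) / c - 1) * (b i * p0 i / B0)
          = ∑ i, ((Real.log c - 1) * (b i * p0 i) / B0 + b i * p i / (B0 * c)) :=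
        Finset.sum_congr rfl fun i _ => by
          field_simp [(hp0 i).ne']
          ring
      have e1 : ∑ i, b i * p0 i = B0 - σ2 := by rw [hB0_def]; ring
      have e2 : ∑ i, b i * p i = B - σ2 := by rw [hB_def]; ring
      rw [e0, Finset.sum_add_distrib, ← Finset.sum_div, ← Finset.sum_div,
        ← Finset.mul_sum, e1, e2]
      ring
    have hfact : B - B * Real.log c ≤ B0 := by
      have h := Real.log_le_sub_one_of_pos (by positivity : (0:ℝ) < 1 / c)
      rw [Real.log_div one_ne_zero hcpos.ne', Real.log_one] at h
      have h2 : B * (0 - Real.log c) ≤ B * (1 / c - 1) :=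
        mul_le_mul_of_nonneg_left (by linarith) hBpos.le
      have hBc : B * (1 / c) = B0 := by
        rw [hc_def]; field_simp
      nlinarith
    have h2 : (Real.log c - 1) * ((B0 - σ2) / B0) + (B - σ2) / (B0 * c)
        ≤ Real.log B - Real.log B0 := by
      have hlc : Real.log c = Real.log B - Real.log B0 :=
        Real.log_div hBpos.ne' hB0pos.ne'
      have hB0c : B0 * c = B := by rw [hc_def]; field_simp
      rw [hB0c, ← hlc]
      have e : (Real.log c - 1) * ((B0 - σ2) / B0) + (B - σ2) / B
          = ((Real.log c - 1) * (B0 - σ2) * B + (B - σ2) * B0) / (B0 * B) := by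
        field_simp
      rw [e, div_le_iff₀ (mul_pos hB0pos hBpos)]
      nlinarith [mul_nonneg hσ.le (by linarith : (0:ℝ) ≤ B0 - (B - B * Real.log c))]
    have hT : ∑ i, (Real.log (p i) - Real.log (p0 i)) * (b i * p0 i / B0)
        ≤ Real.log B - Real.log B0 := by
      calc ∑ i, (Real.log (p i) - Real.log (p0 i)) * (b i * p0 i / B0)
          ≤ ∑ i, (Real.log c + (p i / p0 i) / c - 1) * (b i * p0 i / B0) :=
            Finset.sum_le_sum fun i _ => hpt i
        _ = (Real.log c - 1) * ((B0 - σ2) / B0) + (B - σ2) / (B0 * c) := hsum2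
        _ ≤ Real.log B - Real.log B0 := h2
    rw [hsum1]
    linarith
  · rw [hH, hR]
    simp
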